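/- Let f be a holomorphic function on the right half-plane H with |f| < M, admitting an asymptotic expansion ∑_{j=0}^∞ c_j e^{-λ_j z}. Then |c_j| ≤ M for every j. -/

import Mathlib

open Filter Complex

/-- `∑_j c j e^{-lam j z}` is an asymptotic expansion of `f` on the right half-plane,
for a strictly increasing sequence of levels `0 = lam 0 < lam 1 < ⋯ → ∞`. -/
def HasHolAsymExp (f : ℂ → ℂ) (lam : ℕ → ℝ) (c : ℕ → ℂ) : Prop :=
  lam 0 = 0 ∧ StrictMono lam ∧ Filter.Tendsto lam Filter.atTop Filter.atTop ∧
    ∀ N : ℕ, Filter.Tendsto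
      (fun z : ℂ => ‖
          f z - ∑ j ∈ Finset.range (N + 1), c j * Complex.exp (-(lam j : ℂ) * z)‖ *
        Real.exp (lam N * z.re))
      (Filter.comap Complex.re Filter.atTop) (nhds 0)

/-!
Put `g z = f z e^{λ_N z}`, so that `‖g z‖ ≤ M e^{λ_N Re z}` and
`g z - ∑_{j<N} c_j e^{(λ_N - λ_j) z} → c_N` as `Re z → ∞`. Compare the integrals of `g` over
the vertical segments `Re z = σ₀` and `Re z = σ`, `|Im z| ≤ T`. By Cauchy's theorem on the rectangle
between them they differ by `O(1)` as `T → ∞`, and every oscillating term `e^{(λ_N - λ_j)(σ + it)}`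
has an `O(1)` integral. So for large `σ` the integral is `2T (c_N + O(ε)) + O(1)`, while at `σ₀` it
is at most `2T M e^{λ_N σ₀}`. Dividing by `2T`, letting `T → ∞`, then `ε, σ₀ → 0` gives `‖c_N‖ ≤ M`.
-/

open Set intervalIntegral Topology

noncomputable def verticalIntegral (g : ℂ → ℂ) (s T : ℝ) : ℂ :=
  ∫ t in (-T)..T, g (s + t * I)

lemma norm_verticalIntegral_le {g : ℂ → ℂ} {s T B : ℝ} (hT : 0 ≤ T)
    (hB : ∀ t : ℝ, ‖g (s + t * I)‖ ≤ B) : ‖verticalIntegral g s T‖ ≤ B * (2 * T) := by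
  have := norm_integral_le_of_norm_le_const (a := -T) (b := T) (fun t _ => hB t)
  rwa [show |T - -T| = 2 * T by rw [abs_of_nonneg (by linarith)]; ring] at this

lemma norm_verticalIntegral_sub_le {g : ℂ → ℂ} {a b B : ℝ} (hab : a ≤ b)
    (hg : DifferentiableOn ℂ g (re ⁻¹' Icc a b)) (hB : ∀ z : ℂ, z.re ∈ Icc a b → ‖g z‖ ≤ B)
    (T : ℝ) : ‖verticalIntegral g b T - verticalIntegral g a T‖ ≤ 2 * (B * (b - a)) := by
  have hrect := integral_boundary_rect_eq_zero_of_differentiableOn g ⟨a, -T⟩ ⟨b, T⟩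
    (hg.mono fun z hz => by simpa [uIcc_of_le hab] using hz.1)
  have hhor : ∀ y : ℝ, ‖∫ x in a..b, g (x + y * I)‖ ≤ B * (b - a) := fun y => by
    simpa [abs_of_nonneg (sub_nonneg.2 hab)] using
      norm_integral_le_of_norm_le_const (a := a) (b := b) (f := fun x : ℝ => g (x + y * I))
        fun x hx => hB _ (by rw [uIoc_of_le hab] at hx; simpa using Ioc_subset_Icc_self hx)
  have hvert : verticalIntegral g b T - verticalIntegral g a T =
      I * ((∫ x in a..b, g (x + (-T : ℝ) * I)) - ∫ x in a..b, g (x + T * I)) := by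
    simp only [verticalIntegral, smul_eq_mul] at hrect ⊢
    linear_combination (-I) * hrect +
      ((∫ t in (-T)..T, g (b + t * I)) - ∫ t in (-T)..T, g (a + t * I)) * I_sq
  rw [hvert, norm_mul, norm_I, one_mul]
  linarith [norm_sub_le (∫ x in a..b, g (x + (-T : ℝ) * I)) (∫ x in a..b, g (x + T * I)),
    hhor (-T), hhor T]

lemma norm_verticalIntegral_cexp_le {μ : ℝ} (hμ : μ ≠ 0) (s T : ℝ) :
    ‖verticalIntegral (fun z => cexp (μ * z)) s T‖ ≤ 2 * Real.exp (μ * s) / |μ| := by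
  have hμI : (μ : ℂ) * I ≠ 0 := by simp [hμ]
  have hsplit : ∀ t : ℝ, cexp (μ * (s + t * I)) = cexp (μ * s) * cexp (μ * I * t) := fun t => by
    rw [← Complex.exp_add]; ring_nf
  have hunit : ∀ t : ℝ, ‖cexp (μ * I * t)‖ = 1 := fun t => by
    rw [Complex.norm_exp]; simp
  simp only [verticalIntegral, hsplit, integral_const_mul, integral_exp_mul_complex hμI]
  rw [norm_mul, norm_div, Complex.norm_exp, norm_mul, norm_I, Complex.norm_real,
    Real.norm_eq_abs, mul_one, mul_div_assoc']
  have : ‖cexp (μ * I * T) - cexp (μ * I * (-T : ℝ))‖ ≤ 2 := by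
    linarith [norm_sub_le (cexp (μ * I * T)) (cexp (μ * I * (-T : ℝ))), hunit T, hunit (-T)]
  simp only [mul_re, ofReal_re, ofReal_im, zero_mul, sub_zero]
  rw [mul_comm 2]
  gcongr

lemma verticalIntegral_sub {g h : ℂ → ℂ} {s : ℝ} (hg : Continuous fun t : ℝ => g (s + t * I))
    (hh : Continuous fun t : ℝ => h (s + t * I)) (T : ℝ) :
    verticalIntegral (fun z => g z - h z) s T = verticalIntegral g s T - verticalIntegral h s T :=
  integral_sub (hg.intervalIntegrable _ _) (hh.intervalIntegrable _ _)

lemma verticalIntegral_const (c : ℂ) (s T : ℝ) :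
    verticalIntegral (fun _ => c) s T = (2 * T : ℝ) * c := by
  simp only [verticalIntegral, integral_const, real_smul]
  push_cast
  ring

lemma norm_verticalIntegral_expPoly_le {ι : Type*} (s : Finset ι) (a : ι → ℂ) {μ : ι → ℝ}
    (hμ : ∀ j ∈ s, μ j ≠ 0) (σ T : ℝ) :
    ‖verticalIntegral (fun z => ∑ j ∈ s, a j * cexp (μ j * z)) σ T‖ ≤
      ∑ j ∈ s, ‖a j‖ * (2 * Real.exp (μ j * σ) / |μ j|) := by
  have hint : ∀ j ∈ s, IntervalIntegrable (fun t : ℝ => a j * cexp (μ j * (σ + t * I)))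
      MeasureTheory.volume (-T) T := fun j _ => by
    apply Continuous.intervalIntegrable; fun_prop
  rw [verticalIntegral, integral_finsetSum hint]
  refine (norm_sum_le _ _).trans (Finset.sum_le_sum fun j hj => ?_)
  rw [integral_const_mul, norm_mul]
  gcongr
  exact norm_verticalIntegral_cexp_le (hμ j hj) σ T

lemma le_of_forall_pos_mul_le_mul_add {x y K : ℝ} (h : ∀ T > 0, T * x ≤ T * y + K) : x ≤ y := by
  by_contra! hyx
  have hxy : 0 < x - y := sub_pos.2 hyx
  have hT : (|K| + 1) / (x - y) * (x - y) = |K| + 1 := div_mul_cancel₀ _ hxy.ne'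
  have := h ((|K| + 1) / (x - y)) (by positivity)
  linarith [le_abs_self K, mul_sub ((|K| + 1) / (x - y)) x y]

section ConstantTerm

variable {ι : Type*} {g : ℂ → ℂ} {s : Finset ι} {a : ι → ℂ} {μ : ι → ℝ} {c : ℂ} {M κ : ℝ}

lemma exists_forall_re_ge_norm_sub_le
    (hlim : Tendsto (fun z => g z - ∑ j ∈ s, a j * cexp (μ j * z)) (comap re atTop) (𝓝 c))
    {ε : ℝ} (hε : 0 < ε) (σ₀ : ℝ) :
    ∃ σ, σ₀ ≤ σ ∧ ∀ z : ℂ, σ ≤ z.re → ‖g z - ∑ j ∈ s, a j * cexp (μ j * z) - c‖ ≤ ε := by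
  have := (tendsto_iff_norm_sub_tendsto_zero.1 hlim).eventually (ge_mem_nhds hε)
  obtain ⟨σ, hσ⟩ := eventually_atTop.1 (eventually_comap.1 this)
  exact ⟨max σ σ₀, le_max_right _ _, fun z hz => hσ _ ((le_max_left _ _).trans hz) z rfl⟩

lemma norm_le_mul_exp_add_of_tendsto_sub_expPoly
    (hg : DifferentiableOn ℂ g {z | 0 < z.re})
    (hbound : ∀ z : ℂ, 0 < z.re → ‖g z‖ ≤ M * Real.exp (κ * z.re)) (hμ : ∀ j ∈ s, μ j ≠ 0)
    (hlim : Tendsto (fun z => g z - ∑ j ∈ s, a j * cexp (μ j * z)) (comap re atTop) (𝓝 c))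
    {σ₀ ε : ℝ} (hσ₀ : 0 < σ₀) (hε : 0 < ε) : ‖c‖ ≤ M * Real.exp (κ * σ₀) + ε := by
  set p : ℂ → ℂ := fun z => ∑ j ∈ s, a j * cexp (μ j * z)
  obtain ⟨σ, hσ₀σ, hrem⟩ := exists_forall_re_ge_norm_sub_le hlim hε σ₀
  have hM : 0 ≤ M :=
    nonneg_of_mul_nonneg_left ((norm_nonneg _).trans (hbound 1 one_pos)) (Real.exp_pos _)
  have hgσ : Continuous fun t : ℝ => g (σ + t * I) :=
    hg.continuousOn.comp_continuous (by fun_prop) fun t => by simpa using hσ₀.trans_le hσ₀σ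
  have hpσ : Continuous fun t : ℝ => p (σ + t * I) := by fun_prop
  have hcauchy : ∀ T, ‖verticalIntegral g σ T - verticalIntegral g σ₀ T‖ ≤
      2 * (M * Real.exp (|κ| * σ) * (σ - σ₀)) := by
    refine norm_verticalIntegral_sub_le hσ₀σ (hg.mono fun z hz => hσ₀.trans_le hz.1) ?_
    intro z hz
    have hre : 0 ≤ z.re := hσ₀.le.trans hz.1
    refine (hbound z (hσ₀.trans_le hz.1)).trans ?_
    gcongr
    exacts [le_abs_self κ, hz.2]
  have hleft : ∀ T, 0 ≤ T → ‖verticalIntegral g σ₀ T‖ ≤ M * Real.exp (κ * σ₀) * (2 * T) :=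
    fun T hT => norm_verticalIntegral_le hT fun t => by
      simpa using hbound (σ₀ + t * I) (by simpa using hσ₀)
  have hright : ∀ T, 0 ≤ T → ‖verticalIntegral (fun z => g z - p z - c) σ T‖ ≤ ε * (2 * T) :=
    fun T hT => norm_verticalIntegral_le hT fun t => hrem _ (by simp)
  refine le_of_forall_pos_mul_le_mul_add (K := (2 * (M * Real.exp (|κ| * σ) * (σ - σ₀)) +
    ∑ j ∈ s, ‖a j‖ * (2 * Real.exp (μ j * σ) / |μ j|)) / 2) fun T hT => ?_
  have hsplit : ((2 * T : ℝ) : ℂ) * c = (verticalIntegral g σ T - verticalIntegral g σ₀ T) +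
      verticalIntegral g σ₀ T - verticalIntegral p σ T -
      verticalIntegral (fun z => g z - p z - c) σ T := by
    rw [verticalIntegral_sub (hgσ.sub hpσ) continuous_const, verticalIntegral_sub hgσ hpσ,
      verticalIntegral_const]
    ring
  have hnorm : 2 * T * ‖c‖ = ‖((2 * T : ℝ) : ℂ) * c‖ := by
    rw [norm_mul, norm_real, Real.norm_of_nonneg (by positivity)]
  have htri : 2 * T * ‖c‖ ≤ ‖verticalIntegral g σ T - verticalIntegral g σ₀ T‖ +
      ‖verticalIntegral g σ₀ T‖ + ‖verticalIntegral p σ T‖ +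
      ‖verticalIntegral (fun z => g z - p z - c) σ T‖ := by
    rw [hnorm, hsplit]
    refine (norm_sub_le _ _).trans ?_
    gcongr
    refine (norm_sub_le _ _).trans ?_
    gcongr
    exact norm_add_le _ _
  linarith [hcauchy T, hleft T hT.le, hright T hT.le, norm_verticalIntegral_expPoly_le s a hμ σ T]

theorem norm_le_of_tendsto_sub_expPoly (hg : DifferentiableOn ℂ g {z | 0 < z.re})
    (hbound : ∀ z : ℂ, 0 < z.re → ‖g z‖ ≤ M * Real.exp (κ * z.re)) (hμ : ∀ j ∈ s, μ j ≠ 0)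
    (hlim : Tendsto (fun z => g z - ∑ j ∈ s, a j * cexp (μ j * z)) (comap re atTop) (𝓝 c)) :
    ‖c‖ ≤ M := by
  have hσ₀ : ∀ σ₀ > 0, ‖c‖ ≤ M * Real.exp (κ * σ₀) := fun σ₀ hσ₀ =>
    le_of_forall_pos_le_add fun ε hε =>
      norm_le_mul_exp_add_of_tendsto_sub_expPoly hg hbound hμ hlim hσ₀ hε
  have hlim₀ : Tendsto (fun σ₀ => M * Real.exp (κ * σ₀)) (𝓝[>] 0) (𝓝 M) := by
    simpa using ((by fun_prop : Continuous fun σ₀ => M * Real.exp (κ * σ₀)).tendsto 0).mono_left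
      nhdsWithin_le_nhds
  exact ge_of_tendsto hlim₀ (eventually_nhdsWithin_of_forall hσ₀)

end ConstantTerm

lemma tendsto_mul_cexp_sub_of_tendsto {f : ℂ → ℂ} {lam : ℕ → ℝ} {c : ℕ → ℂ} {N : ℕ}
    (h : Tendsto (fun z : ℂ => ‖f z - ∑ j ∈ Finset.range (N + 1), c j * cexp (-(lam j : ℂ) * z)‖ *
      Real.exp (lam N * z.re)) (comap re atTop) (𝓝 0)) :
    Tendsto (fun z => f z * cexp (lam N * z) -
        ∑ j ∈ Finset.range N, c j * cexp ((lam N - lam j : ℝ) * z)) (comap re atTop) (𝓝 (c N)) := by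
  rw [tendsto_iff_norm_sub_tendsto_zero]
  refine h.congr fun z => ?_
  have hexp : ∀ j, cexp (-(lam j : ℂ) * z) * cexp (lam N * z) = cexp ((lam N - lam j : ℝ) * z) :=
    fun j => by rw [← Complex.exp_add]; push_cast; ring_nf
  have hnorm : ‖cexp (lam N * z)‖ = Real.exp (lam N * z.re) := by simp [Complex.norm_exp]
  rw [← hnorm, ← norm_mul, sub_mul, Finset.sum_mul, Finset.sum_range_succ]
  simp only [mul_assoc, hexp, sub_self, ofReal_zero, zero_mul, Complex.exp_zero, mul_one]
  ring_nf

/-- **Cauchy-type estimates for the coefficients of an asymptotic expansion.**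
If `f` is holomorphic on the right half-plane with `|f| < M` and has an asymptotic
expansion `∑ c j e^{-lam j z}`, then `|c j| ≤ M` for every `j`. -/
theorem stmt_7 (f : ℂ → ℂ) (lam : ℕ → ℝ) (c : ℕ → ℂ) (M : ℝ)
    (hf : DifferentiableOn ℂ f {z : ℂ | 0 < z.re})
    (hbdd : ∀ z : ℂ, 0 < z.re → ‖f z‖ < M)
    (hae : HasHolAsymExp f lam c) :
    ∀ j, ‖c j‖ ≤ M := by
  obtain ⟨-, hmono, -, hexp⟩ := hae
  intro N
  refine norm_le_of_tendsto_sub_expPoly (g := fun z => f z * cexp (lam N * z)) (κ := lam N)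
    (hf.mul (by fun_prop : Differentiable ℂ _).differentiableOn)
    (fun z hz => ?_) (fun j hj => sub_ne_zero.2 (hmono (Finset.mem_range.1 hj)).ne')
    (tendsto_mul_cexp_sub_of_tendsto (hexp N))
  rw [norm_mul, Complex.norm_exp, re_ofReal_mul]
  exact mul_le_mul_of_nonneg_right (hbdd z hz).le (Real.exp_pos _).le
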